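/- Main proposition: assume ℓ̃_ρ^adv(x) ≤ ℓ(x) + ρ‖∇ℓ(x)‖ + ½ρ²λ₁(x) pointwise, ℓ̃_ρ^adv is convex, and for an invertible linear feature map h, ℓ̃_ρ^adv ∘ h⁻¹ is L-Lipschitz with ‖h(x') - E_{x∼D}[h(x)]‖ ≤ σ. Then ℓ̃_ρ^adv(x') ≤ E_{x∼D}[ℓ(x)] + ρ E_{x∼D}‖∇ℓ(x)‖ + ½ρ² E_{x∼D}[λ₁(x)] + Lσ. -/

import Mathlib

/-!
Jensen's inequality bounds the adversarial loss at the mean of `D` by its expectation, which the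
pointwise bound controls term by term. Since `h` is linear it commutes with the expectation, so
the Lipschitz condition in feature coordinates moves from the mean to `x'` at a cost of `L σ`.
-/

open MeasureTheory

section

variable {E F : Type*} [NormedAddCommGroup E] [NormedSpace ℝ E] [FiniteDimensional ℝ E]
  [NormedAddCommGroup F] [NormedSpace ℝ F]

/-- Convex functions on finite-dimensional spaces are continuous, so Jensen needs no extra
hypothesis. -/
theorem ConvexOn.map_integral_le_of_finiteDimensional {α : Type*} [MeasurableSpace α]
    {μ : Measure α} [IsProbabilityMeasure μ] {g : E → ℝ} (hg : ConvexOn ℝ Set.univ g)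
    {f : α → E} (hfi : Integrable f μ) (hgi : Integrable (g ∘ f) μ) :
    g (∫ x, f x ∂μ) ≤ ∫ x, g (f x) ∂μ :=
  hg.map_integral_le (hg.continuousOn isOpen_univ) isClosed_univ
    (.of_forall fun _ ↦ Set.mem_univ _) hfi hgi

theorem ConvexOn.le_integral_add_mul_norm_sub_integral [MeasurableSpace E]
    {μ : Measure E} [IsProbabilityMeasure μ] {g : E → ℝ} (hg : ConvexOn ℝ Set.univ g)
    (e : E ≃ₗ[ℝ] F) {K : NNReal} (hK : LipschitzWith K (g ∘ e.symm))
    (hid : Integrable (fun x ↦ x) μ) (hgi : Integrable g μ) (x' : E) :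
    g x' ≤ (∫ x, g x ∂μ) + K * ‖e x' - ∫ x, e x ∂μ‖ := by
  have : FiniteDimensional ℝ F := e.finiteDimensional
  have he : ∫ x, e x ∂μ = e (∫ x, x ∂μ) :=
    e.toContinuousLinearEquiv.integral_comp_comm (fun x ↦ x)
  have hlip : g x' ≤ g (∫ x, x ∂μ) + K * ‖e x' - ∫ x, e x ∂μ‖ := by
    simpa [he, dist_eq_norm] using hK.le_add_mul (e x') (e (∫ x, x ∂μ))
  have hjensen := hg.map_integral_le_of_finiteDimensional hid hgi
  linarith

end

theorem robust_distillation_main_general {n : ℕ}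
    (μ : Measure (EuclideanSpace ℝ (Fin n))) [IsProbabilityMeasure μ]
    (ℓ lam1 ladv : EuclideanSpace ℝ (Fin n) → ℝ)
    (G : EuclideanSpace ℝ (Fin n) → EuclideanSpace ℝ (Fin n))
    (ρ L σ : ℝ) (hL : 0 ≤ L)
    (hpt : ∀ x, ladv x ≤ ℓ x + ρ * ‖G x‖ + (1 / 2) * ρ ^ 2 * lam1 x)
    (hconv : ConvexOn ℝ Set.univ ladv)
    (h : EuclideanSpace ℝ (Fin n) ≃ₗ[ℝ] EuclideanSpace ℝ (Fin n))
    (hLip : LipschitzWith (Real.toNNReal L) (ladv ∘ h.symm))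
    (hℓ : Integrable ℓ μ) (hG : Integrable (fun x => ‖G x‖) μ)
    (hlam : Integrable lam1 μ) (hadv : Integrable ladv μ)
    (hmean : Integrable (fun x => x) μ)
    (x' : EuclideanSpace ℝ (Fin n))
    (hx' : ‖h x' - ∫ x, h x ∂μ‖ ≤ σ) :
    ladv x' ≤ (∫ x, ℓ x ∂μ) + ρ * (∫ x, ‖G x‖ ∂μ)
      + (1 / 2) * ρ ^ 2 * (∫ x, lam1 x ∂μ) + L * σ := by
  have hsharp := hconv.le_integral_add_mul_norm_sub_integral h hLip hmean hadv x'
  rw [Real.coe_toNNReal L hL] at hsharp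
  have hbound : (∫ x, ladv x ∂μ) ≤ (∫ x, ℓ x ∂μ) + ρ * (∫ x, ‖G x‖ ∂μ)
      + (1 / 2) * ρ ^ 2 * (∫ x, lam1 x ∂μ) := by
    have hℓG : Integrable (fun x ↦ ℓ x + ρ * ‖G x‖) μ := hℓ.add (hG.const_mul ρ)
    have hlam' : Integrable (fun x ↦ (1 / 2) * ρ ^ 2 * lam1 x) μ := hlam.const_mul _
    calc (∫ x, ladv x ∂μ) ≤ ∫ x, ℓ x + ρ * ‖G x‖ + (1 / 2) * ρ ^ 2 * lam1 x ∂μ :=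
          integral_mono hadv (hℓG.add hlam') hpt
      _ = _ := by
        rw [integral_add hℓG hlam', integral_add hℓ (hG.const_mul ρ), integral_const_mul,
          integral_const_mul]
  have hshift : L * ‖h x' - ∫ x, h x ∂μ‖ ≤ L * σ := mul_le_mul_of_nonneg_left hx' hL
  linarith

/-- Main proposition: under a pointwise quadratic bound on the adversarial loss, convexity of
the adversarial loss, and an `L`-Lipschitz condition for the adversarial loss composed with the
inverse of the invertible linear feature map `h`, any distilled datum `x'` with
`‖h(x') - E[h(x)]‖ ≤ σ` satisfies
`ℓ̃_ρ^adv(x') ≤ E[ℓ] + ρ E‖∇ℓ‖ + ½ρ² E[λ₁] + Lσ`. -/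
theorem robust_distillation_main {n : ℕ}
    (μ : Measure (EuclideanSpace ℝ (Fin n))) [IsProbabilityMeasure μ]
    (ℓ lam1 ladv : EuclideanSpace ℝ (Fin n) → ℝ)
    (G : EuclideanSpace ℝ (Fin n) → EuclideanSpace ℝ (Fin n))
    (ρ L σ : ℝ) (hρ : 0 < ρ) (hL : 0 ≤ L) (hσ : 0 ≤ σ)
    (hpt : ∀ x, ladv x ≤ ℓ x + ρ * ‖G x‖ + (1 / 2) * ρ ^ 2 * lam1 x)
    (hconv : ConvexOn ℝ Set.univ ladv)
    (h : EuclideanSpace ℝ (Fin n) ≃ₗ[ℝ] EuclideanSpace ℝ (Fin n))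
    (hLip : LipschitzWith (Real.toNNReal L) (ladv ∘ h.symm))
    (hℓ : Integrable ℓ μ) (hG : Integrable (fun x => ‖G x‖) μ)
    (hlam : Integrable lam1 μ) (hadv : Integrable ladv μ)
    (hmean : Integrable (fun x => x) μ)
    (x' : EuclideanSpace ℝ (Fin n))
    (hx' : ‖h x' - ∫ x, h x ∂μ‖ ≤ σ) :
    ladv x' ≤ (∫ x, ℓ x ∂μ) + ρ * (∫ x, ‖G x‖ ∂μ)
      + (1 / 2) * ρ ^ 2 * (∫ x, lam1 x ∂μ) + L * σ :=
  robust_distillation_main_general μ ℓ lam1 ladv G ρ L σ hL hpt hconv h hLip hℓ hG hlam hadv hmean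
    x' hx'
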